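/- arXiv:2302.13701 — 7 statements merged into one kernel-verified Lean document; each statement's English description precedes it below -/
import Mathlib

section
/- Let G be a finite simple graph, let I and Î be finite sets of requests (unordered pairs of vertices of G), and set FP = Î \ I and FN = I \ Î. Let R* ⊆ Î be any feasible set of requests with |R*| = Opt_G(Î). Then |R* ∩ I| ≥ Opt_G(I) − Opt_G(FP) − Opt_G(FN) ≥ Opt_G(I) − 2·Opt_G(FP ∪ FN). (This is the profit guarantee of the algorithm Trust, which commits to edge-disjoint paths for the requests of R* and accepts exactly the requests of R* that appear in I; it shows Trust is strictly (1 − 2γ)-competitive for disjoint path allocation, where γ = Opt_G(FP ∪ FN)/Opt_G(I).) -/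
open scoped Classical

/-- A finite set `T` of requests (unordered pairs of vertices of `G`) is feasible if
one can assign to each request a path in `G` between its two vertices such that the
assigned paths are pairwise edge-disjoint. -/
def DPFeasible {V : Type*} (G : SimpleGraph V) (T : Finset (Sym2 V)) : Prop :=
  ∃ p : (r : Sym2 V) → r ∈ T → Σ u : V, Σ v : V, G.Walk u v,
    (∀ r hr, s(((p r hr).1 : V), (p r hr).2.1) = r ∧ (p r hr).2.2.IsPath) ∧
    (∀ r hr r' hr', r ≠ r' →
      ∀ e ∈ (p r hr).2.2.edges, e ∉ (p r' hr').2.2.edges)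

/-- `DPOpt G S` is the maximum cardinality of a feasible subset of the request set
`S`. -/
noncomputable def DPOpt {V : Type*} (G : SimpleGraph V) (S : Finset (Sym2 V)) : ℕ :=
  (S.powerset.filter fun T => DPFeasible G T).sup Finset.card

lemma DPFeasible.subset {V : Type*} {G : SimpleGraph V} {T T' : Finset (Sym2 V)}
    (h : T' ⊆ T) (hT : DPFeasible G T) : DPFeasible G T' := by
  obtain ⟨p, h1, h2⟩ := hT
  exact ⟨fun r hr => p r (h hr), fun r hr => h1 r (h hr),
    fun r hr r' hr' hne => h2 r (h hr) r' (h hr') hne⟩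

lemma DPFeasible.empty {V : Type*} (G : SimpleGraph V) : DPFeasible G ∅ := by
  refine ⟨fun r hr => absurd hr (by simp), fun r hr => absurd hr (by simp),
    fun r hr => absurd hr (by simp)⟩

lemma card_le_DPOpt {V : Type*} {G : SimpleGraph V} {T S : Finset (Sym2 V)}
    (hsub : T ⊆ S) (hfeas : DPFeasible G T) : T.card ≤ DPOpt G S :=
  Finset.le_sup (by simp [Finset.mem_filter, Finset.mem_powerset, hsub, hfeas])

lemma DPOpt_exists {V : Type*} (G : SimpleGraph V) (S : Finset (Sym2 V)) :
    ∃ T ⊆ S, DPFeasible G T ∧ T.card = DPOpt G S := by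
  have hne : (S.powerset.filter fun T => DPFeasible G T).Nonempty :=
    ⟨∅, by simp [Finset.mem_filter, DPFeasible.empty]⟩
  obtain ⟨T, hT, hcard⟩ := Finset.exists_mem_eq_sup _ hne Finset.card
  simp only [Finset.mem_filter, Finset.mem_powerset] at hT
  exact ⟨T, hT.1, hT.2, hcard.symm⟩

lemma DPOpt_mono {V : Type*} (G : SimpleGraph V) {S S' : Finset (Sym2 V)}
    (h : S ⊆ S') : DPOpt G S ≤ DPOpt G S' := by
  obtain ⟨T, hTs, hTf, hTc⟩ := DPOpt_exists G S
  exact hTc ▸ card_le_DPOpt (hTs.trans h) hTf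

/-- Trust guarantee for disjoint path allocation.
Let `G` be a finite simple graph, `I` and `Ihat` finite sets of requests,
`FP = Ihat \ I`, `FN = I \ Ihat`, and let `Rstar ⊆ Ihat` be a feasible set of
requests with `|Rstar| = Opt_G(Ihat)`. Then
`|Rstar ∩ I| ≥ Opt_G(I) − Opt_G(FP) − Opt_G(FN) ≥ Opt_G(I) − 2·Opt_G(FP ∪ FN)`. -/
theorem trust_dpa_competitive
    {V : Type*} [Fintype V] [DecidableEq V] (G : SimpleGraph V)
    (I Ihat : Finset (Sym2 V))
    (Rstar : Finset (Sym2 V)) (hsub : Rstar ⊆ Ihat)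
    (hfeas : DPFeasible G Rstar) (hopt : Rstar.card = DPOpt G Ihat) :
    (DPOpt G I : ℤ) - DPOpt G (Ihat \ I) - DPOpt G (I \ Ihat) ≤
      ((Rstar ∩ I).card : ℤ) ∧
    (DPOpt G I : ℤ) - 2 * DPOpt G ((Ihat \ I) ∪ (I \ Ihat)) ≤
      (DPOpt G I : ℤ) - DPOpt G (Ihat \ I) - DPOpt G (I \ Ihat) := by
  constructor
  · -- main inequality
    obtain ⟨T, hTs, hTf, hTc⟩ := DPOpt_exists G I
    have h1 : DPOpt G I ≤ DPOpt G Ihat + DPOpt G (I \ Ihat) := by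
      have hsplit : T.card = (T ∩ Ihat).card + (T \ Ihat).card :=
        (Finset.card_inter_add_card_sdiff T Ihat).symm
      have ha : (T ∩ Ihat).card ≤ DPOpt G Ihat :=
        card_le_DPOpt Finset.inter_subset_right (hTf.subset Finset.inter_subset_left)
      have hb : (T \ Ihat).card ≤ DPOpt G (I \ Ihat) :=
        card_le_DPOpt (Finset.sdiff_subset_sdiff hTs le_rfl)
          (hTf.subset (Finset.sdiff_subset))
      omega
    have h2 : (Rstar \ I).card ≤ DPOpt G (Ihat \ I) :=
      card_le_DPOpt (Finset.sdiff_subset_sdiff hsub le_rfl)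
        (hfeas.subset (Finset.sdiff_subset))
    have h3 : Rstar.card = (Rstar ∩ I).card + (Rstar \ I).card :=
      (Finset.card_inter_add_card_sdiff Rstar I).symm
    push_cast
    omega
  · have h1 : DPOpt G (Ihat \ I) ≤ DPOpt G ((Ihat \ I) ∪ (I \ Ihat)) :=
      DPOpt_mono G Finset.subset_union_left
    have h2 : DPOpt G (I \ Ihat) ≤ DPOpt G ((Ihat \ I) ∪ (I \ Ihat)) :=
      DPOpt_mono G Finset.subset_union_right
    push_cast
    omega
end

section
/- Let I and Î be finite sets of intervals, and set FP = Î \ I and FN = I \ Î. Let I* ⊆ Î be any pairwise non-overlapping set with |I*| = Opt(Î). Then |I* ∩ I| ≥ Opt(I) − Opt(FP) − Opt(FN) ≥ Opt(I) − 2·Opt(FP ∪ FN). (This is the profit guarantee of the algorithm Trust for interval scheduling, which accepts exactly the intervals of I* that appear in the input I; it shows Trust is strictly (1 − 2γ)-competitive, where γ = Opt(FP ∪ FN)/Opt(I).) -/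
open scoped Classical

/-- An interval is a pair `(a, b)` of integers; it is *valid* when `a < b`. -/
abbrev Iv := ℤ × ℤ

/-- Two intervals `(a,b)` and `(c,d)` overlap if `max a c < min b d`. -/
def Overlap (i j : Iv) : Prop := max i.1 j.1 < min i.2 j.2

instance : ∀ i j : Iv, Decidable (Overlap i j) := fun _ _ => by
  unfold Overlap; infer_instance

/-- A finite set of intervals is pairwise non-overlapping. -/
def NonOverlapping (T : Finset Iv) : Prop :=
  ∀ i ∈ T, ∀ j ∈ T, i ≠ j → ¬ Overlap i j

instance : DecidablePred NonOverlapping := fun _ => by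
  unfold NonOverlapping; infer_instance

/-- `Opt S` is the maximum cardinality of a pairwise non-overlapping subset of `S`. -/
def Opt (S : Finset Iv) : ℕ :=
  (S.powerset.filter fun T => NonOverlapping T).sup Finset.card

lemma card_le_Opt {T S : Finset Iv} (hTS : T ⊆ S) (hT : NonOverlapping T) :
    T.card ≤ Opt S := by
  apply Finset.le_sup
  simp [Finset.mem_filter, Finset.mem_powerset, hTS, hT]

lemma NonOverlapping.mono {T T' : Finset Iv} (h : NonOverlapping T) (hs : T' ⊆ T) :
    NonOverlapping T' := fun i hi j hj => h i (hs hi) j (hs hj)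

lemma Opt_mono {S S' : Finset Iv} (h : S ⊆ S') : Opt S ≤ Opt S' := by
  apply Finset.sup_mono
  intro T hT
  simp only [Finset.mem_filter, Finset.mem_powerset] at *
  exact ⟨hT.1.trans h, hT.2⟩

lemma exists_Opt (S : Finset Iv) :
    ∃ T ⊆ S, NonOverlapping T ∧ T.card = Opt S := by
  have hne : (S.powerset.filter fun T => NonOverlapping T).Nonempty :=
    ⟨∅, by simp [NonOverlapping]⟩
  obtain ⟨T, hT, hc⟩ := Finset.exists_mem_eq_sup _ hne Finset.card
  simp only [Finset.mem_filter, Finset.mem_powerset] at hT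
  exact ⟨T, hT.1, hT.2, hc.symm⟩

/-- Trust guarantee for interval scheduling.
If `Istar` is an optimal (maximum-cardinality pairwise non-overlapping) subset of the
prediction `Ihat`, then `|Istar ∩ I| ≥ Opt I − Opt FP − Opt FN ≥ Opt I − 2·Opt (FP ∪ FN)`,
where `FP = Ihat \ I` and `FN = I \ Ihat`. -/
theorem trust_intervals_competitive
    (I Ihat : Finset Iv)
    (hI : ∀ i ∈ I, i.1 < i.2) (hIhat : ∀ i ∈ Ihat, i.1 < i.2)
    (Istar : Finset Iv) (hsub : Istar ⊆ Ihat)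
    (hfeas : NonOverlapping Istar) (hopt : Istar.card = Opt Ihat) :
    (Opt I : ℤ) - Opt (Ihat \ I) - Opt (I \ Ihat) ≤ ((Istar ∩ I).card : ℤ) ∧
    (Opt I : ℤ) - 2 * Opt ((Ihat \ I) ∪ (I \ Ihat)) ≤
      (Opt I : ℤ) - Opt (Ihat \ I) - Opt (I \ Ihat) := by
  constructor
  · obtain ⟨T, hTI, hTno, hTc⟩ := exists_Opt I
    have h1 : (T ∩ Ihat).card ≤ Istar.card := by
      rw [hopt]
      exact card_le_Opt (Finset.inter_subset_right.trans (le_refl _)) (hTno.mono Finset.inter_subset_left)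
    have h2 : (T \ Ihat).card ≤ Opt (I \ Ihat) :=
      card_le_Opt (fun x hx => by
        simp only [Finset.mem_sdiff] at *; exact ⟨hTI hx.1, hx.2⟩)
        (hTno.mono Finset.sdiff_subset)
    have h3 : (Istar \ I).card ≤ Opt (Ihat \ I) :=
      card_le_Opt (fun x hx => by
        simp only [Finset.mem_sdiff] at *; exact ⟨hsub hx.1, hx.2⟩)
        (hfeas.mono Finset.sdiff_subset)
    have hT' : (T ∩ Ihat).card + (T \ Ihat).card = T.card :=
      Finset.card_inter_add_card_sdiff T Ihat
    have hS' : (Istar ∩ I).card + (Istar \ I).card = Istar.card :=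
      Finset.card_inter_add_card_sdiff Istar I
    have : Opt I ≤ (Istar ∩ I).card + Opt (Ihat \ I) + Opt (I \ Ihat) := by omega
    push_cast
    omega
  · have h1 : Opt (Ihat \ I) ≤ Opt ((Ihat \ I) ∪ (I \ Ihat)) :=
      Opt_mono Finset.subset_union_left
    have h2 : Opt (I \ Ihat) ≤ Opt ((Ihat \ I) ∪ (I \ Ihat)) :=
      Opt_mono Finset.subset_union_right
    push_cast
    omega
end

section
/- For every real γ with 0 ≤ γ ≤ 1/2 and every real ε with 0 < ε ≤ 1, there exists a finite prediction set Î_w of intervals such that for every pairwise non-overlapping set I* ⊆ Î_w with |I*| = Opt(Î_w), there exists a finite set I_w of intervals with: (1) |I* ∩ I_w| ≤ (1 − 2γ(Î_w,I_w))·Opt(I_w); (2) |γ(Î_w,I_w) − γ| ≤ ε; and (3) Opt(I_w) ≥ 1/ε, where γ(Î_w,I_w) = Opt((I_w \ Î_w) ∪ (Î_w \ I_w))/Opt(I_w). Since the profit of the algorithm Trust (which accepts exactly the intervals of its chosen optimal solution I* of Î_w that appear in the input) equals |I* ∩ I_w|, the competitive ratio of Trust for interval scheduling is at most 1 − 2γ.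 -/
open scoped Classical

lemma opt_le_card (S : Finset Iv) : Opt S ≤ S.card := by
  apply Finset.sup_le
  intro T hT
  simp only [Finset.mem_filter, Finset.mem_powerset] at hT
  exact Finset.card_le_card hT.1

lemma le_opt {S T : Finset Iv} (hTS : T ⊆ S) (h : NonOverlapping T) : T.card ≤ Opt S := by
  apply Finset.le_sup
  simp only [Finset.mem_filter, Finset.mem_powerset]
  exact ⟨hTS, h⟩

lemma injOn_of_cover {S : Finset Iv} {f : Iv → ℤ}
    (hf : ∀ i ∈ S, ∀ j ∈ S, i ≠ j → f i = f j → Overlap i j)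
    {T : Finset Iv} (hTS : T ⊆ S) (hNO : NonOverlapping T) :
    Set.InjOn f T := by
  intro a ha b hb hab
  by_contra hne
  exact hNO a ha b hb hne (hf a (hTS ha) b (hTS hb) hne hab)

lemma opt_le_of_cover {S : Finset Iv} {f : Iv → ℤ} {r : ℕ}
    (hf : ∀ i ∈ S, ∀ j ∈ S, i ≠ j → f i = f j → Overlap i j)
    (h : (S.image f).card ≤ r) : Opt S ≤ r := by
  apply Finset.sup_le
  intro T hT
  simp only [Finset.mem_filter, Finset.mem_powerset] at hT
  obtain ⟨hTS, hNO⟩ := hT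
  calc T.card = (T.image f).card := (Finset.card_image_of_injOn (injOn_of_cover hf hTS hNO)).symm
    _ ≤ (S.image f).card := Finset.card_le_card (Finset.image_subset_image hTS)
    _ ≤ r := h

lemma not_overlap {i j : Iv} (h : i.2 ≤ j.1 ∨ j.2 ≤ i.1) : ¬ Overlap i j := by
  simp only [Overlap, max_lt_iff, lt_min_iff]
  omega

namespace TP

/-- predicted interval of error block `j`, choice "Z" -/
def Zb (j : ℕ) : Iv := (10*(j:ℤ)+1, 10*(j:ℤ)+3)
/-- predicted interval of error block `j`, choice "X" -/
def Xb (j : ℕ) : Iv := (10*(j:ℤ), 10*(j:ℤ)+2)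
/-- common interval of block `j` -/
def Cb (j : ℕ) : Iv := (10*(j:ℤ), 10*(j:ℤ)+1)
/-- new input interval of error block `j`, overlapping Zb j (if b) or Xb j (if ¬b) -/
def Wb (b : Bool) (j : ℕ) : Iv := if b then (10*(j:ℤ)+2, 10*(j:ℤ)+4) else (10*(j:ℤ)-1, 10*(j:ℤ)+1)
/-- the non-chosen predicted interval -/
def Ob (b : Bool) (j : ℕ) : Iv := if b then Xb j else Zb j
/-- block index of an interval -/
def fb (iv : Iv) : ℤ := (iv.1 + 1) / 10

lemma fb_Zb (j : ℕ) : fb (Zb j) = j := by simp only [fb, Zb]; omega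
lemma fb_Xb (j : ℕ) : fb (Xb j) = j := by simp only [fb, Xb]; omega
lemma fb_Cb (j : ℕ) : fb (Cb j) = j := by simp only [fb, Cb]; omega
lemma fb_Wb (b : Bool) (j : ℕ) : fb (Wb b j) = j := by
  cases b <;> simp only [fb, Wb, if_true, if_false, Bool.false_eq_true] <;> omega
lemma fb_Ob (b : Bool) (j : ℕ) : fb (Ob b j) = j := by
  cases b <;> simp only [Ob, if_true, if_false, Bool.false_eq_true, fb_Zb, fb_Xb]

def Ihat (k N : ℕ) : Finset Iv :=
  ((Finset.range k).image Zb) ∪ ((Finset.range k).image Xb) ∪ ((Finset.Ico k (N-k)).image Cb)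

lemma mem_Ihat {k N : ℕ} {iv : Iv} : iv ∈ Ihat k N ↔
    (∃ j, j < k ∧ iv = Zb j) ∨ (∃ j, j < k ∧ iv = Xb j) ∨
    (∃ j, (k ≤ j ∧ j < N-k) ∧ iv = Cb j) := by
  simp only [Ihat, Finset.mem_union, Finset.mem_image, Finset.mem_range, Finset.mem_Ico,
    eq_comm, or_assoc]


-- injectivity / distinctness facts
lemma Zb_inj {j j' : ℕ} (h : Zb j = Zb j') : j = j' := by
  simp only [Zb, Prod.ext_iff] at h; omega
lemma Xb_inj {j j' : ℕ} (h : Xb j = Xb j') : j = j' := by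
  simp only [Xb, Prod.ext_iff] at h; omega
lemma Cb_inj {j j' : ℕ} (h : Cb j = Cb j') : j = j' := by
  simp only [Cb, Prod.ext_iff] at h; omega
lemma Zb_ne_Xb {j j' : ℕ} : Zb j ≠ Xb j' := by
  intro h; simp only [Zb, Xb, Prod.ext_iff] at h; omega
lemma Zb_ne_Cb {j j' : ℕ} : Zb j ≠ Cb j' := by
  intro h; simp only [Zb, Cb, Prod.ext_iff] at h; omega
lemma Xb_ne_Cb {j j' : ℕ} : Xb j ≠ Cb j' := by
  intro h; simp only [Xb, Cb, Prod.ext_iff] at h; omega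
lemma Wb_ne_Zb {b : Bool} {j j' : ℕ} : Wb b j ≠ Zb j' := by
  intro h; cases b <;> simp only [Wb, Zb, if_true, if_false, Bool.false_eq_true, Prod.ext_iff] at h <;> omega
lemma Wb_ne_Xb {b : Bool} {j j' : ℕ} : Wb b j ≠ Xb j' := by
  intro h; cases b <;> simp only [Wb, Xb, if_true, if_false, Bool.false_eq_true, Prod.ext_iff] at h <;> omega
lemma Wb_ne_Cb {b : Bool} {j j' : ℕ} : Wb b j ≠ Cb j' := by
  intro h; cases b <;> simp only [Wb, Cb, if_true, if_false, Bool.false_eq_true, Prod.ext_iff] at h <;> omega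
lemma Wb_ne_Ob {b b' : Bool} {j j' : ℕ} : Wb b j ≠ Ob b' j' := by
  cases b' <;> simp only [Ob, if_true, if_false, Bool.false_eq_true]
  · exact Wb_ne_Zb
  · exact Wb_ne_Xb

lemma Wb_notMem_Ihat {b : Bool} {j k N : ℕ} : Wb b j ∉ Ihat k N := by
  rw [mem_Ihat]
  rintro (⟨j', _, h⟩ | ⟨j', _, h⟩ | ⟨j', _, h⟩)
  · exact Wb_ne_Zb h
  · exact Wb_ne_Xb h
  · exact Wb_ne_Cb h

lemma overlap_Zb_Xb (j : ℕ) : Overlap (Zb j) (Xb j) := by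
  simp only [Overlap, Zb, Xb, max_lt_iff, lt_min_iff]; omega
lemma overlap_Zb_Xb' (j : ℕ) : Overlap (Xb j) (Zb j) := by
  simp only [Overlap, Zb, Xb, max_lt_iff, lt_min_iff]; omega

/-- elements of Ihat with the same block index and distinct, overlap -/
lemma Ihat_cover {k N : ℕ} :
    ∀ i ∈ Ihat k N, ∀ j ∈ Ihat k N, i ≠ j → fb i = fb j → Overlap i j := by
  intro i hi j hj hne hf
  rw [mem_Ihat] at hi hj
  rcases hi with ⟨a, ha, rfl⟩ | ⟨a, ha, rfl⟩ | ⟨a, ha, rfl⟩ <;>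
    rcases hj with ⟨b, hb, rfl⟩ | ⟨b, hb, rfl⟩ | ⟨b, hb, rfl⟩ <;>
    simp only [fb_Zb, fb_Xb, fb_Cb, Nat.cast_inj] at hf <;> subst hf
  · exact absurd rfl hne
  · exact overlap_Zb_Xb a
  · omega
  · exact overlap_Zb_Xb' a
  · exact absurd rfl hne
  · omega
  · omega
  · omega
  · exact absurd rfl hne

lemma image_fb_subset {N : ℕ} (S : Finset Iv)
    (h : ∀ i ∈ S, ∃ j, j < N ∧ fb i = j) :
    (S.image fb).card ≤ N := by
  have hsub : S.image fb ⊆ (Finset.range N).image (fun n : ℕ => (n : ℤ)) := by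
    intro x hx
    simp only [Finset.mem_image, Finset.mem_range] at hx ⊢
    obtain ⟨i, hi, rfl⟩ := hx
    obtain ⟨j, hj, hfj⟩ := h i hi
    exact ⟨j, hj, hfj.symm⟩
  calc (S.image fb).card ≤ _ := Finset.card_le_card hsub
    _ ≤ (Finset.range N).card := Finset.card_image_le
    _ = N := Finset.card_range N

lemma opt_Ihat_le {k N : ℕ} (hk : 2*k ≤ N) : Opt (Ihat k N) ≤ N - k := by
  apply opt_le_of_cover Ihat_cover
  apply image_fb_subset
  intro i hi
  rw [mem_Ihat] at hi
  rcases hi with ⟨a, ha, rfl⟩ | ⟨a, ha, rfl⟩ | ⟨a, ha, rfl⟩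
  · exact ⟨a, by omega, fb_Zb a⟩
  · exact ⟨a, by omega, fb_Xb a⟩
  · exact ⟨a, by omega, fb_Cb a⟩


def Tlow (k N : ℕ) : Finset Iv :=
  ((Finset.range k).image Zb) ∪ ((Finset.Ico k (N-k)).image Cb)

lemma mem_Tlow {k N : ℕ} {iv : Iv} : iv ∈ Tlow k N ↔
    (∃ j, j < k ∧ iv = Zb j) ∨ (∃ j, (k ≤ j ∧ j < N-k) ∧ iv = Cb j) := by
  simp only [Tlow, Finset.mem_union, Finset.mem_image, Finset.mem_range, Finset.mem_Ico, eq_comm]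

lemma Tlow_nonoverlapping (k N : ℕ) : NonOverlapping (Tlow k N) := by
  intro i hi j hj hne
  rw [mem_Tlow] at hi hj
  apply not_overlap
  rcases hi with ⟨a, ha, rfl⟩ | ⟨a, ha, rfl⟩ <;>
    rcases hj with ⟨b, hb, rfl⟩ | ⟨b, hb, rfl⟩
  · have : a ≠ b := fun h => hne (by rw [h])
    simp only [Zb]; omega
  · simp only [Zb, Cb]; omega
  · simp only [Zb, Cb]; omega
  · have : a ≠ b := fun h => hne (by rw [h])
    simp only [Cb]; omega

lemma Tlow_card {k N : ℕ} : (Tlow k N).card = k + (N - k - k) := by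
  have hdisj : Disjoint ((Finset.range k).image Zb) ((Finset.Ico k (N-k)).image Cb) := by
    rw [Finset.disjoint_left]
    intro x hx hx'
    simp only [Finset.mem_image] at hx hx'
    obtain ⟨a, _, rfl⟩ := hx
    obtain ⟨b, _, hb⟩ := hx'
    exact Zb_ne_Cb hb.symm
  rw [Tlow, Finset.card_union_of_disjoint hdisj,
    Finset.card_image_of_injective _ (fun a b h => Zb_inj h),
    Finset.card_image_of_injective _ (fun a b h => Cb_inj h), Finset.card_range, Nat.card_Ico]

lemma Tlow_subset {k N : ℕ} : Tlow k N ⊆ Ihat k N := by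
  intro x hx
  rw [mem_Tlow] at hx
  rw [mem_Ihat]
  rcases hx with ⟨a, ha, rfl⟩ | ⟨a, ha, rfl⟩
  · exact Or.inl ⟨a, ha, rfl⟩
  · exact Or.inr (Or.inr ⟨a, ha, rfl⟩)

lemma opt_Ihat {k N : ℕ} (hk : 2*k ≤ N) : Opt (Ihat k N) = N - k := by
  refine le_antisymm (opt_Ihat_le hk) ?_
  have := le_opt Tlow_subset (Tlow_nonoverlapping k N)
  rw [Tlow_card] at this
  omega

lemma Istar_structure {k N : ℕ} (hk : 2*k ≤ N) {Istar : Finset Iv}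
    (hsub : Istar ⊆ Ihat k N) (hNO : NonOverlapping Istar)
    (hcard : Istar.card = N - k) :
    (∀ j, j < k → Zb j ∈ Istar ∨ Xb j ∈ Istar) ∧
    (∀ j, k ≤ j → j < N-k → Cb j ∈ Istar) := by
  set R : Finset ℤ := (Finset.range (N-k)).image (fun n : ℕ => (n : ℤ)) with hR
  have hRcard : R.card = N - k := by
    rw [hR, Finset.card_image_of_injective _ (fun a b h => Nat.cast_injective h),
      Finset.card_range]
  have hsubR : Istar.image fb ⊆ R := by
    intro x hx
    simp only [Finset.mem_image] at hx
    obtain ⟨i, hi, rfl⟩ := hx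
    have hi' := hsub hi
    rw [mem_Ihat] at hi'
    simp only [hR, Finset.mem_image, Finset.mem_range]
    rcases hi' with ⟨a, ha, rfl⟩ | ⟨a, ha, rfl⟩ | ⟨a, ha, rfl⟩
    · exact ⟨a, by omega, (fb_Zb a).symm⟩
    · exact ⟨a, by omega, (fb_Xb a).symm⟩
    · exact ⟨a, by omega, (fb_Cb a).symm⟩
  have hicard : (Istar.image fb).card = N - k := by
    rw [Finset.card_image_of_injOn (injOn_of_cover Ihat_cover hsub hNO), hcard]
  have hEq : Istar.image fb = R := Finset.eq_of_subset_of_card_le hsubR (by omega)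
  have key : ∀ j : ℕ, j < N - k → ∃ a ∈ Istar, fb a = j := by
    intro j hj
    have : (j : ℤ) ∈ Istar.image fb := by
      rw [hEq]
      simp only [hR, Finset.mem_image, Finset.mem_range]
      exact ⟨j, hj, rfl⟩
    simp only [Finset.mem_image] at this
    obtain ⟨a, ha, hfa⟩ := this
    exact ⟨a, ha, hfa⟩
  constructor
  · intro j hj
    obtain ⟨a, ha, hfa⟩ := key j (by omega)
    have ha' := hsub ha
    rw [mem_Ihat] at ha'
    rcases ha' with ⟨b, hb, rfl⟩ | ⟨b, hb, rfl⟩ | ⟨b, hb, rfl⟩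
    · rw [fb_Zb, Nat.cast_inj] at hfa; subst hfa; exact Or.inl ha
    · rw [fb_Xb, Nat.cast_inj] at hfa; subst hfa; exact Or.inr ha
    · rw [fb_Cb, Nat.cast_inj] at hfa; omega
  · intro j hj1 hj2
    obtain ⟨a, ha, hfa⟩ := key j hj2
    have ha' := hsub ha
    rw [mem_Ihat] at ha'
    rcases ha' with ⟨b, hb, rfl⟩ | ⟨b, hb, rfl⟩ | ⟨b, hb, rfl⟩
    · rw [fb_Zb, Nat.cast_inj] at hfa; omega
    · rw [fb_Xb, Nat.cast_inj] at hfa; omega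
    · rw [fb_Cb, Nat.cast_inj] at hfa; subst hfa; exact ha


def Iw (ch : ℕ → Bool) (k N : ℕ) : Finset Iv :=
  ((Finset.range k).image (fun j => Ob (ch j) j)) ∪
  ((Finset.range k).image (fun j => Wb (ch j) j)) ∪
  ((Finset.Ico k (N-k)).image Cb)

lemma mem_Iw {ch : ℕ → Bool} {k N : ℕ} {iv : Iv} : iv ∈ Iw ch k N ↔
    (∃ j, j < k ∧ iv = Ob (ch j) j) ∨ (∃ j, j < k ∧ iv = Wb (ch j) j) ∨
    (∃ j, (k ≤ j ∧ j < N-k) ∧ iv = Cb j) := by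
  simp only [Iw, Finset.mem_union, Finset.mem_image, Finset.mem_range, Finset.mem_Ico,
    eq_comm, or_assoc]

lemma Ob_support (b : Bool) (j : ℕ) :
    10*(j:ℤ) ≤ (Ob b j).1 ∧ (Ob b j).2 ≤ 10*(j:ℤ)+3 ∧ (Ob b j).1 < (Ob b j).2 := by
  cases b <;> simp only [Ob, Zb, Xb, if_true, if_false, Bool.false_eq_true] <;> omega

lemma Wb_support (b : Bool) (j : ℕ) :
    10*(j:ℤ)-1 ≤ (Wb b j).1 ∧ (Wb b j).2 ≤ 10*(j:ℤ)+4 ∧ (Wb b j).1 < (Wb b j).2 := by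
  cases b <;> simp only [Wb, if_true, if_false, Bool.false_eq_true] <;> omega

lemma not_overlap_Ob_Wb (b : Bool) (j : ℕ) : ¬ Overlap (Ob b j) (Wb b j) := by
  apply not_overlap
  cases b <;> simp only [Ob, Wb, Zb, Xb, if_true, if_false, Bool.false_eq_true] <;> omega

lemma not_overlap_Wb_Ob (b : Bool) (j : ℕ) : ¬ Overlap (Wb b j) (Ob b j) := by
  apply not_overlap
  cases b <;> simp only [Ob, Wb, Zb, Xb, if_true, if_false, Bool.false_eq_true] <;> omega

lemma Iw_nonoverlapping (ch : ℕ → Bool) (k N : ℕ) : NonOverlapping (Iw ch k N) := by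
  intro i hi j hj hne
  rw [mem_Iw] at hi hj
  rcases hi with ⟨a, ha, rfl⟩ | ⟨a, ha, rfl⟩ | ⟨a, ha, rfl⟩ <;>
    rcases hj with ⟨b, hb, rfl⟩ | ⟨b, hb, rfl⟩ | ⟨b, hb, rfl⟩
  · -- Ob / Ob
    have hab : a ≠ b := fun h => hne (by rw [h])
    have h1 := Ob_support (ch a) a
    have h2 := Ob_support (ch b) b
    exact not_overlap (by omega)
  · -- Ob / Wb
    by_cases hab : a = b
    · subst hab; exact not_overlap_Ob_Wb (ch a) a
    · have h1 := Ob_support (ch a) a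
      have h2 := Wb_support (ch b) b
      exact not_overlap (by omega)
  · -- Ob / Cb
    have h1 := Ob_support (ch a) a
    simp only [Cb]
    exact not_overlap (by simp only [Cb]; omega)
  · -- Wb / Ob
    by_cases hab : a = b
    · subst hab; exact not_overlap_Wb_Ob (ch a) a
    · have h1 := Wb_support (ch a) a
      have h2 := Ob_support (ch b) b
      exact not_overlap (by omega)
  · -- Wb / Wb
    have hab : a ≠ b := fun h => hne (by rw [h])
    have h1 := Wb_support (ch a) a
    have h2 := Wb_support (ch b) b
    exact not_overlap (by omega)
  · -- Wb / Cb
    have h1 := Wb_support (ch a) a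
    exact not_overlap (by simp only [Cb]; omega)
  · -- Cb / Ob
    have h2 := Ob_support (ch b) b
    exact not_overlap (by simp only [Cb]; omega)
  · -- Cb / Wb
    have h2 := Wb_support (ch b) b
    exact not_overlap (by simp only [Cb]; omega)
  · -- Cb / Cb
    have hab : a ≠ b := fun h => hne (by rw [h])
    exact not_overlap (by simp only [Cb]; omega)

lemma Ob_inj {b b' : Bool} {j j' : ℕ} (h : Ob b j = Ob b' j') : j = j' := by
  cases b <;> cases b' <;>
    simp only [Ob, if_true, if_false, Bool.false_eq_true] at h
  · exact Zb_inj h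
  · exact absurd h Zb_ne_Xb
  · exact absurd h.symm Zb_ne_Xb
  · exact Xb_inj h

lemma Wb_inj {b b' : Bool} {j j' : ℕ} (h : Wb b j = Wb b' j') : j = j' := by
  cases b <;> cases b' <;>
    simp only [Wb, if_true, if_false, Bool.false_eq_true, Prod.ext_iff] at h <;> omega

lemma Ob_ne_Cb {b : Bool} {j j' : ℕ} : Ob b j ≠ Cb j' := by
  cases b <;> simp only [Ob, if_true, if_false, Bool.false_eq_true]
  · exact Zb_ne_Cb
  · exact Xb_ne_Cb

lemma Iw_card {ch : ℕ → Bool} {k N : ℕ} : (Iw ch k N).card = k + k + (N - k - k) := by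
  have hd1 : Disjoint ((Finset.range k).image (fun j => Ob (ch j) j))
      ((Finset.range k).image (fun j => Wb (ch j) j)) := by
    rw [Finset.disjoint_left]
    intro x hx hx'
    simp only [Finset.mem_image] at hx hx'
    obtain ⟨a, _, rfl⟩ := hx
    obtain ⟨b, _, hb⟩ := hx'
    exact Wb_ne_Ob hb
  have hd2 : Disjoint (((Finset.range k).image (fun j => Ob (ch j) j)) ∪
      ((Finset.range k).image (fun j => Wb (ch j) j))) ((Finset.Ico k (N-k)).image Cb) := by
    rw [Finset.disjoint_left]
    intro x hx hx'
    simp only [Finset.mem_union, Finset.mem_image] at hx hx'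
    obtain ⟨b, _, hb⟩ := hx'
    rcases hx with ⟨a, _, rfl⟩ | ⟨a, _, rfl⟩
    · exact Ob_ne_Cb hb.symm
    · exact Wb_ne_Cb hb.symm
  rw [Iw, Finset.card_union_of_disjoint hd2, Finset.card_union_of_disjoint hd1,
    Finset.card_image_of_injOn (fun a _ b _ h => Ob_inj h),
    Finset.card_image_of_injOn (fun a _ b _ h => Wb_inj h),
    Finset.card_image_of_injective _ (fun a b h => Cb_inj h), Finset.card_range, Nat.card_Ico]

lemma opt_Iw {ch : ℕ → Bool} {k N : ℕ} (hk : 2*k ≤ N) : Opt (Iw ch k N) = N := by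
  have h1 : Opt (Iw ch k N) ≤ N := by
    have := opt_le_card (Iw ch k N)
    rw [Iw_card] at this
    omega
  have h2 := le_opt (Finset.Subset.refl (Iw ch k N)) (Iw_nonoverlapping ch k N)
  rw [Iw_card] at h2
  omega


/-- the symmetric difference set -/
def Dset (ch : ℕ → Bool) (k : ℕ) : Finset Iv :=
  ((Finset.range k).image (fun j => Wb (ch j) j)) ∪
  ((Finset.range k).image (fun j => Ob (!ch j) j))

lemma mem_Dset {ch : ℕ → Bool} {k : ℕ} {iv : Iv} : iv ∈ Dset ch k ↔
    (∃ j, j < k ∧ iv = Wb (ch j) j) ∨ (∃ j, j < k ∧ iv = Ob (!ch j) j) := by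
  simp only [Dset, Finset.mem_union, Finset.mem_image, Finset.mem_range, eq_comm]

lemma Ob_mem_Ihat {b : Bool} {j k N : ℕ} (hj : j < k) : Ob b j ∈ Ihat k N := by
  rw [mem_Ihat]
  cases b
  · exact Or.inl ⟨j, hj, rfl⟩
  · exact Or.inr (Or.inl ⟨j, hj, rfl⟩)

lemma Cb_mem_Ihat {j k N : ℕ} (h1 : k ≤ j) (h2 : j < N - k) : Cb j ∈ Ihat k N := by
  rw [mem_Ihat]; exact Or.inr (Or.inr ⟨j, ⟨h1, h2⟩, rfl⟩)

lemma Cb_mem_Iw {ch : ℕ → Bool} {j k N : ℕ} (h1 : k ≤ j) (h2 : j < N - k) :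
    Cb j ∈ Iw ch k N := by
  rw [mem_Iw]; exact Or.inr (Or.inr ⟨j, ⟨h1, h2⟩, rfl⟩)

lemma Ob_notMem_Iw {ch : ℕ → Bool} {j k N : ℕ} : Ob (!ch j) j ∉ Iw ch k N := by
  rw [mem_Iw]
  rintro (⟨a, ha, h⟩ | ⟨a, ha, h⟩ | ⟨a, ha, h⟩)
  · have : j = a := Ob_inj h
    subst this
    cases hc : ch j <;> rw [hc] at h <;>
      simp only [Bool.not_true, Bool.not_false, Ob, if_true, if_false, Bool.false_eq_true] at h
    · exact Zb_ne_Xb h.symm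
    · exact Zb_ne_Xb h
  · exact Wb_ne_Ob h.symm
  · exact Ob_ne_Cb h

lemma sdiff_eq (ch : ℕ → Bool) (k N : ℕ) :
    (Iw ch k N \ Ihat k N) ∪ (Ihat k N \ Iw ch k N) = Dset ch k := by
  ext x
  rw [Finset.mem_union, Finset.mem_sdiff, Finset.mem_sdiff, mem_Dset]
  constructor
  · rintro (⟨hxIw, hxIh⟩ | ⟨hxIh, hxIw⟩)
    · rw [mem_Iw] at hxIw
      rcases hxIw with ⟨a, ha, rfl⟩ | ⟨a, ha, rfl⟩ | ⟨a, ha, rfl⟩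
      · exact absurd (Ob_mem_Ihat ha) hxIh
      · exact Or.inl ⟨a, ha, rfl⟩
      · exact absurd (Cb_mem_Ihat ha.1 ha.2) hxIh
    · rw [mem_Ihat] at hxIh
      rcases hxIh with ⟨a, ha, rfl⟩ | ⟨a, ha, rfl⟩ | ⟨a, ha, rfl⟩
      · refine Or.inr ⟨a, ha, ?_⟩
        cases hc : ch a
        · exfalso
          apply hxIw
          rw [mem_Iw]
          refine Or.inl ⟨a, ha, ?_⟩
          rw [hc]
          simp [Ob]
        · simp [Ob]
      · refine Or.inr ⟨a, ha, ?_⟩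
        cases hc : ch a
        · simp [Ob]
        · exfalso
          apply hxIw
          rw [mem_Iw]
          refine Or.inl ⟨a, ha, ?_⟩
          rw [hc]
          simp [Ob]
      · exact absurd (Cb_mem_Iw ha.1 ha.2) hxIw
  · rintro (⟨a, ha, rfl⟩ | ⟨a, ha, rfl⟩)
    · refine Or.inl ⟨?_, Wb_notMem_Ihat⟩
      rw [mem_Iw]
      exact Or.inr (Or.inl ⟨a, ha, rfl⟩)
    · exact Or.inr ⟨Ob_mem_Ihat ha, Ob_notMem_Iw⟩

lemma overlap_Wb_Ob (b : Bool) (j : ℕ) : Overlap (Wb b j) (Ob (!b) j) := by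
  cases b <;>
    simp only [Wb, Ob, Bool.not_true, Bool.not_false, Zb, Xb, if_true, if_false,
      Bool.false_eq_true, Overlap, max_lt_iff, lt_min_iff] <;> omega

lemma overlap_Ob_Wb (b : Bool) (j : ℕ) : Overlap (Ob (!b) j) (Wb b j) := by
  cases b <;>
    simp only [Wb, Ob, Bool.not_true, Bool.not_false, Zb, Xb, if_true, if_false,
      Bool.false_eq_true, Overlap, max_lt_iff, lt_min_iff] <;> omega

lemma opt_Dset (ch : ℕ → Bool) (k : ℕ) : Opt (Dset ch k) = k := by
  have hub : Opt (Dset ch k) ≤ k := by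
    apply opt_le_of_cover (f := fb)
    · intro i hi j hj hne hf
      rw [mem_Dset] at hi hj
      rcases hi with ⟨a, ha, rfl⟩ | ⟨a, ha, rfl⟩ <;>
        rcases hj with ⟨b, hb, rfl⟩ | ⟨b, hb, rfl⟩ <;>
        simp only [fb_Wb, fb_Ob, Nat.cast_inj] at hf <;> subst hf
      · exact absurd rfl hne
      · exact overlap_Wb_Ob (ch a) a
      · exact overlap_Ob_Wb (ch a) a
      · exact absurd rfl hne
    · apply image_fb_subset
      intro i hi
      rw [mem_Dset] at hi
      rcases hi with ⟨a, ha, rfl⟩ | ⟨a, ha, rfl⟩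
      · exact ⟨a, ha, fb_Wb _ a⟩
      · exact ⟨a, ha, fb_Ob _ a⟩
  have hlb : k ≤ Opt (Dset ch k) := by
    have hsub : (Finset.range k).image (fun j => Ob (!ch j) j) ⊆ Dset ch k := by
      intro x hx
      rw [mem_Dset]
      simp only [Finset.mem_image, Finset.mem_range] at hx
      obtain ⟨a, ha, rfl⟩ := hx
      exact Or.inr ⟨a, ha, rfl⟩
    have hno : NonOverlapping ((Finset.range k).image (fun j => Ob (!ch j) j)) := by
      intro i hi j hj hne
      simp only [Finset.mem_image, Finset.mem_range] at hi hj
      obtain ⟨a, ha, rfl⟩ := hi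
      obtain ⟨b, hb, rfl⟩ := hj
      have hab : a ≠ b := fun h => hne (by rw [h])
      have h1 := Ob_support (!ch a) a
      have h2 := Ob_support (!ch b) b
      exact not_overlap (by omega)
    have := le_opt hsub hno
    rwa [Finset.card_image_of_injOn (fun a _ b _ h => Ob_inj h), Finset.card_range] at this
  omega


lemma inter_eq {k N : ℕ} {Istar : Finset Iv} (hsub : Istar ⊆ Ihat k N)
    (hNO : NonOverlapping Istar)
    (hstr2 : ∀ j, k ≤ j → j < N-k → Cb j ∈ Istar) :
    Istar ∩ Iw (fun j => decide (Zb j ∈ Istar)) k N = (Finset.Ico k (N-k)).image Cb := by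
  set ch : ℕ → Bool := fun j => decide (TP.Zb j ∈ Istar) with hch
  ext x
  rw [Finset.mem_inter]
  constructor
  · rintro ⟨hx1, hx2⟩
    have hxI := hsub hx1
    rw [mem_Ihat] at hxI
    rcases hxI with ⟨a, ha, rfl⟩ | ⟨a, ha, rfl⟩ | ⟨a, ha, rfl⟩
    · exfalso
      have hca : ch a = true := decide_eq_true hx1
      rw [mem_Iw] at hx2
      rcases hx2 with ⟨b, hb, h⟩ | ⟨b, hb, h⟩ | ⟨b, hb, h⟩
      · have hba : b = a := Ob_inj (h.symm.trans (show Zb a = Ob false a by simp [Ob]))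
        subst hba
        rw [hca] at h
        simp only [Ob, if_true] at h
        exact Zb_ne_Xb h
      · exact Wb_ne_Zb h.symm
      · exact Zb_ne_Cb h
    · exfalso
      have hza : Zb a ∉ Istar := fun hz => hNO _ hz _ hx1 Zb_ne_Xb (overlap_Zb_Xb a)
      have hca : ch a = false := decide_eq_false hza
      rw [mem_Iw] at hx2
      rcases hx2 with ⟨b, hb, h⟩ | ⟨b, hb, h⟩ | ⟨b, hb, h⟩
      · have hba : b = a := Ob_inj (h.symm.trans (show Xb a = Ob true a by simp [Ob]))
        subst hba
        rw [hca] at h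
        simp only [Ob, if_false, Bool.false_eq_true] at h
        exact Zb_ne_Xb h.symm
      · exact Wb_ne_Xb h.symm
      · exact Xb_ne_Cb h
    · simp only [Finset.mem_image, Finset.mem_Ico]
      exact ⟨a, ⟨ha.1, ha.2⟩, rfl⟩
  · intro hx
    simp only [Finset.mem_image, Finset.mem_Ico] at hx
    obtain ⟨a, ha, rfl⟩ := hx
    exact ⟨hstr2 a ha.1 ha.2, Cb_mem_Iw ha.1 ha.2⟩

lemma Ihat_valid {k N : ℕ} : ∀ i ∈ Ihat k N, i.1 < i.2 := by
  intro i hi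
  rw [mem_Ihat] at hi
  rcases hi with ⟨a, _, rfl⟩ | ⟨a, _, rfl⟩ | ⟨a, _, rfl⟩ <;>
    simp only [Zb, Xb, Cb] <;> omega

lemma Iw_valid {ch : ℕ → Bool} {k N : ℕ} : ∀ i ∈ Iw ch k N, i.1 < i.2 := by
  intro i hi
  rw [mem_Iw] at hi
  rcases hi with ⟨a, _, rfl⟩ | ⟨a, _, rfl⟩ | ⟨a, _, rfl⟩
  · exact (Ob_support (ch a) a).2.2
  · exact (Wb_support (ch a) a).2.2
  · simp only [Cb]; omega

end TP

/-- Upper bound on the competitive ratio of Trust for interval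
scheduling. For every `0 ≤ γ ≤ 1/2` and `0 < ε ≤ 1` there is a prediction set
`Ihat` such that for every optimal pairwise non-overlapping `Istar ⊆ Ihat` there is
an input set `Iw` with `|Istar ∩ Iw| ≤ (1 − 2γ(Ihat,Iw))·Opt Iw`,
`|γ(Ihat,Iw) − γ| ≤ ε` and `Opt Iw ≥ 1/ε`, where
`γ(Ihat,Iw) = Opt ((Iw \ Ihat) ∪ (Ihat \ Iw)) / Opt Iw`. -/
theorem trust_intervals_upper_bound
    (γ ε : ℝ) (hγ0 : 0 ≤ γ) (hγ1 : γ ≤ 1 / 2) (hε0 : 0 < ε) (hε1 : ε ≤ 1) :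
    ∃ Ihat : Finset Iv, (∀ i ∈ Ihat, i.1 < i.2) ∧
      ∀ Istar : Finset Iv, Istar ⊆ Ihat → NonOverlapping Istar →
        Istar.card = Opt Ihat →
        ∃ Iw : Finset Iv, (∀ i ∈ Iw, i.1 < i.2) ∧
          (((Istar ∩ Iw).card : ℝ) ≤
            (1 - 2 * ((Opt ((Iw \ Ihat) ∪ (Ihat \ Iw)) : ℝ) / (Opt Iw : ℝ))) *
              (Opt Iw : ℝ)) ∧
          |((Opt ((Iw \ Ihat) ∪ (Ihat \ Iw)) : ℝ) / (Opt Iw : ℝ)) - γ| ≤ ε ∧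
          (1 / ε : ℝ) ≤ (Opt Iw : ℝ) := by
  classical
  set N : ℕ := ⌈1/ε⌉₊ with hN
  set k : ℕ := ⌊γ * N⌋₊ with hk
  have hN0 : 0 < N := Nat.ceil_pos.mpr (by positivity)
  have hNε : 1/ε ≤ (N:ℝ) := Nat.le_ceil _
  have hNpos : (0:ℝ) < N := by exact_mod_cast hN0
  have hkle : (k:ℝ) ≤ γ * N := Nat.floor_le (by positivity)
  have hklt : γ * N < k + 1 := Nat.lt_floor_add_one _
  have h1N : 1 ≤ ε * N := by
    calc (1:ℝ) = ε * (1/ε) := by field_simp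
    _ ≤ ε * N := by
        apply mul_le_mul_of_nonneg_left hNε (le_of_lt hε0)
  have hk2 : 2*k ≤ N := by
    have : ((2*k : ℕ):ℝ) ≤ (N:ℝ) := by push_cast; nlinarith
    exact_mod_cast this
  refine ⟨TP.Ihat k N, TP.Ihat_valid, ?_⟩
  intro Istar hsub hNO hcard
  rw [TP.opt_Ihat hk2] at hcard
  obtain ⟨hstr1, hstr2⟩ := TP.Istar_structure hk2 hsub hNO hcard
  set ch : ℕ → Bool := fun j => decide (TP.Zb j ∈ Istar) with hch
  refine ⟨TP.Iw ch k N, TP.Iw_valid, ?_, ?_, ?_⟩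
  · rw [TP.sdiff_eq ch k N, TP.opt_Dset, TP.opt_Iw hk2, TP.inter_eq hsub hNO hstr2,
      Finset.card_image_of_injective _ (fun a b h => TP.Cb_inj h), Nat.card_Ico]
    have hcast : ((N - k - k : ℕ):ℝ) = (N:ℝ) - 2*k := by
      have : ((N - k - k : ℕ)) + 2*k = N := by omega
      have := congrArg (fun n : ℕ => (n:ℝ)) this
      push_cast at this
      linarith
    rw [hcast]
    have : (1 - 2*((k:ℝ)/N))*N = (N:ℝ) - 2*k := by
      field_simp
    rw [this]
  · rw [TP.sdiff_eq ch k N, TP.opt_Dset, TP.opt_Iw hk2]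
    have e1 : (k:ℝ)/N - γ = (k - γ*N)/N := by field_simp
    rw [e1, abs_div, abs_of_pos hNpos, div_le_iff₀ hNpos, abs_le]
    constructor <;> nlinarith
  · rw [TP.opt_Iw hk2]
    exact hNε
end

section
/- Let Î be a finite set of intervals and let I* be the earliest-finish greedy optimal solution of Î. Then for every interval i ∈ Î there exists an interval r ∈ I* such that r overlaps i and the right endpoint of r is at most the right endpoint of i. (In particular, this holds for every interval of Î belonging to an optimal solution of the input, as used in the analysis of TrustGreedy.) -/
open scoped Classical

/-- The interval of `S` with minimum right endpoint, ties broken by the fixed rule of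
taking the minimum left endpoint (obtained as the lexicographic minimum of
`(right endpoint, left endpoint)`). -/
def efPick (S : Finset Iv) (h : S.Nonempty) : Iv :=
  let m := (S.image fun i => toLex (i.2, i.1)).min' (h.image _)
  ((ofLex m).2, (ofLex m).1)

/-- Fuelled version of the earliest-finish greedy construction: repeatedly add an
interval with minimum right endpoint among the intervals overlapping no
already-selected interval. -/
def efGreedyAux : ℕ → Finset Iv → Finset Iv
  | 0, _ => ∅
  | fuel + 1, S =>
    if h : S.Nonempty then
      let r := efPick S h
      insert r (efGreedyAux fuel (S.filter fun i => i ≠ r ∧ ¬ Overlap i r))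
    else ∅

/-- The earliest-finish greedy optimal solution `I*` of a prediction set. -/
def efGreedy (S : Finset Iv) : Finset Iv := efGreedyAux S.card S

/-! The first interval picked by the greedy has the smallest right endpoint in `Î`. Either it
overlaps `i`, or `i` survives into the residual instance on which the greedy recurses. -/

lemma Overlap.symm {i j : Iv} (h : Overlap i j) : Overlap j i := by
  unfold Overlap at *
  rwa [max_comm, min_comm]

lemma overlap_self {i : Iv} (h : i.1 < i.2) : Overlap i i := by
  simpa [Overlap] using h

lemma efPick_mem (S : Finset Iv) (h : S.Nonempty) : efPick S h ∈ S := by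
  obtain ⟨i, hi, hmi⟩ := Finset.mem_image.1 (Finset.min'_mem _ (h.image fun i => toLex (i.2, i.1)))
  simpa [efPick, ← hmi] using hi

lemma efPick_snd_le (S : Finset Iv) (h : S.Nonempty) {j : Iv} (hj : j ∈ S) :
    (efPick S h).2 ≤ j.2 := by
  have hle := Finset.min'_le _ _ (Finset.mem_image_of_mem (fun i : Iv => toLex (i.2, i.1)) hj)
  rcases Prod.Lex.le_iff.1 hle with hlt | ⟨heq, -⟩
  · exact hlt.le
  · exact heq.le

lemma exists_mem_efGreedyAux_overlap_snd_le (fuel : ℕ) (S : Finset Iv) (hfuel : S.card ≤ fuel)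
    {i : Iv} (hi : i ∈ S) (hvalid : i.1 < i.2) :
    ∃ r ∈ efGreedyAux fuel S, Overlap r i ∧ r.2 ≤ i.2 := by
  induction fuel generalizing S with
  | zero => simp_all
  | succ n ih =>
    have hS : S.Nonempty := ⟨i, hi⟩
    set r := efPick S hS
    rw [efGreedyAux, dif_pos hS]
    by_cases hri : Overlap r i
    · exact ⟨r, Finset.mem_insert_self _ _, hri, efPick_snd_le S hS hi⟩
    set T := S.filter fun j => j ≠ r ∧ ¬ Overlap j r
    have hiT : i ∈ T := by
      refine Finset.mem_filter.2 ⟨hi, ?_, fun hir => hri hir.symm⟩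
      rintro rfl
      exact hri (overlap_self hvalid)
    have hTS : T ⊂ S := Finset.filter_ssubset.2 ⟨r, efPick_mem S hS, by simp⟩
    have hTcard : T.card ≤ n := Nat.le_of_lt_succ ((Finset.card_lt_card hTS).trans_le hfuel)
    obtain ⟨r', hr', hr'i, hr'le⟩ := ih T hTcard hiT
    exact ⟨r', Finset.mem_insert_of_mem hr', hr'i, hr'le⟩

/-- every interval `i` of the prediction set `Ihat` overlaps some
interval `r` of the earliest-finish greedy optimal solution `I* = efGreedy Ihat`
whose right endpoint is at most the right endpoint of `i`. -/
theorem efGreedy_overlaps_with_earlier_right_endpoint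
    (Ihat : Finset Iv) (hIhat : ∀ i ∈ Ihat, i.1 < i.2) :
    ∀ i ∈ Ihat, ∃ r ∈ efGreedy Ihat, Overlap r i ∧ r.2 ≤ i.2 := fun i hi =>
  exists_mem_efGreedyAux_overlap_snd_le Ihat.card Ihat le_rfl hi (hIhat i hi)
end

section
/- Fix an integer ℓ ≥ 1 and let S be a finite set of intervals with endpoints in {0, …, 2^ℓ − 1}. For 1 ≤ i ≤ ℓ, let S_i be the set of intervals of S having level i. Then Opt(S_i) equals the number of distinct level-i integers that are contained in some interval of S_i, and consequently Σ_{i=1}^{ℓ} Opt(S_i) ≥ Opt(S). (This shows that accepting greedily within a uniformly random level loses at most a factor ℓ = ⌈log m⌉, which yields the robustness guarantee (1 − α)/⌈log m⌉ of the algorithm RobustTrust.) -/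
open scoped Classical

/-- The level of an integer `c` (with `1 ≤ c ≤ 2^ℓ − 1`) is `ℓ − v₂(c)` where `v₂` is
the 2-adic valuation. -/
def lvlZ (ℓ : ℕ) (c : ℤ) : ℕ := ℓ - padicValNat 2 c.toNat

/-- The level of an interval: the minimum of the levels of the integers `c` with
`a < c ≤ b` that it contains. -/
noncomputable def ivLvl (ℓ : ℕ) (iv : Iv) : ℕ :=
  if h : (Finset.Ioc iv.1 iv.2).Nonempty then (Finset.Ioc iv.1 iv.2).inf' h (lvlZ ℓ)
  else 0

/-! Between two positive integers with the same 2-adic valuation `v` lies one of larger valuation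
(the quotients by `2^v` are odd, so an even number lies between them). Hence intervals of level `i`
through distinct integers of level `i` do not overlap, while intervals through a common integer
do. As every interval of level `i` contains an integer of level `i`, a largest non-overlapping
subfamily of `S_i` consists of one interval through each covered integer of level `i`. The sum
bound holds because a non-overlapping family splits by level into non-overlapping subfamilies of
the `S_i`. -/

lemma padicValNat_two_pow_mul {k a : ℕ} (ha : ¬ 2 ∣ a) : padicValNat 2 (2 ^ k * a) = k := by
  rw [padicValNat.mul (by positivity) (by omega), padicValNat.prime_pow,
    padicValNat.eq_zero_of_not_dvd ha, add_zero]

lemma exists_between_padicValNat_two_lt {n₁ n₂ : ℕ} (hn₁ : n₁ ≠ 0) (h : n₁ < n₂)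
    (hv : padicValNat 2 n₁ = padicValNat 2 n₂) :
    ∃ m, n₁ < m ∧ m < n₂ ∧ padicValNat 2 n₁ < padicValNat 2 m := by
  obtain ⟨e, a, ha, rfl⟩ := Nat.exists_eq_pow_mul_and_not_dvd hn₁ 2 (by norm_num)
  obtain ⟨f, b, hb, rfl⟩ := Nat.exists_eq_pow_mul_and_not_dvd (by omega : n₂ ≠ 0) 2 (by norm_num)
  rw [padicValNat_two_pow_mul ha, padicValNat_two_pow_mul hb] at hv
  subst hv
  have hab : a < b := Nat.lt_of_mul_lt_mul_left h
  -- `a` and `b` are odd, so the even number `a + 1` lies strictly between them.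
  obtain ⟨k, hk⟩ : 2 ∣ a + 1 := by omega
  refine ⟨2 ^ e * (a + 1), by gcongr; omega, by gcongr; omega, ?_⟩
  rw [padicValNat_two_pow_mul ha, Nat.lt_iff_add_one_le, ← padicValNat_dvd_iff_le (by positivity)]
  exact ⟨k, by rw [hk]; ring⟩

lemma exists_between_lvlZ_lt {ℓ : ℕ} {c d : ℤ} (hc : 0 < c) (hcd : c < d)
    (heq : lvlZ ℓ c = lvlZ ℓ d) (hpos : 0 < lvlZ ℓ c) :
    ∃ m, c < m ∧ m < d ∧ lvlZ ℓ m < lvlZ ℓ c := by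
  lift c to ℕ using hc.le
  lift d to ℕ using (hc.trans hcd).le
  simp only [lvlZ, Int.toNat_natCast] at heq hpos ⊢
  have hv : padicValNat 2 c = padicValNat 2 d := by omega
  obtain ⟨m, hcm, hmd, hm⟩ := exists_between_padicValNat_two_lt (by omega) (by omega) hv
  exact ⟨m, by omega, by omega, by simp only [Int.toNat_natCast]; omega⟩

lemma one_le_lvlZ {ℓ : ℕ} {c : ℤ} (hc : 0 < c) (hcℓ : c < 2 ^ ℓ) : 1 ≤ lvlZ ℓ c := by
  lift c to ℕ using hc.le
  have hlt : 2 ^ padicValNat 2 c < 2 ^ ℓ :=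
    (Nat.le_of_dvd (by omega) pow_padicValNat_dvd).trans_lt (by exact_mod_cast hcℓ)
  have := (Nat.pow_lt_pow_iff_right (by norm_num)).1 hlt
  simp only [lvlZ, Int.toNat_natCast]
  omega

lemma overlap_comm {I J : Iv} : Overlap I J ↔ Overlap J I := by
  unfold Overlap; rw [max_comm, min_comm]

lemma overlap_of_mem {I J : Iv} {c : ℤ} (hI : c ∈ Set.Ioc I.1 I.2) (hJ : c ∈ Set.Ioc J.1 J.2) :
    Overlap I J :=
  (max_lt hI.1 hJ.1).trans_le (le_min hI.2 hJ.2)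

lemma ivLvl_le_lvlZ {ℓ : ℕ} {I : Iv} {c : ℤ} (hc : c ∈ Set.Ioc I.1 I.2) :
    ivLvl ℓ I ≤ lvlZ ℓ c := by
  have hc' : c ∈ Finset.Ioc I.1 I.2 := Finset.mem_Ioc.2 hc
  rw [ivLvl, dif_pos ⟨c, hc'⟩]
  exact Finset.inf'_le _ hc'

lemma exists_lvlZ_eq_ivLvl {ℓ : ℕ} {I : Iv} (h : I.1 < I.2) :
    ∃ c ∈ Set.Ioc I.1 I.2, lvlZ ℓ c = ivLvl ℓ I := by
  have hne : (Finset.Ioc I.1 I.2).Nonempty := Finset.nonempty_Ioc.2 h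
  obtain ⟨c, hc, hceq⟩ := Finset.exists_mem_eq_inf' hne (lvlZ ℓ)
  exact ⟨c, Finset.mem_Ioc.1 hc, by rw [ivLvl, dif_pos hne, hceq]⟩

/-- A point of level below `i` lies between `c` and `d`; if `I` and `J` overlapped, it would lie
in one of them. -/
lemma not_overlap_of_ivLvl_eq {ℓ i : ℕ} (hi : 0 < i) {I J : Iv} (hI : ivLvl ℓ I = i)
    (hJ : ivLvl ℓ J = i) {c d : ℤ} (hc₀ : 0 < c) (hd₀ : 0 < d) (hcI : c ∈ Set.Ioc I.1 I.2)
    (hdJ : d ∈ Set.Ioc J.1 J.2) (hc : lvlZ ℓ c = i) (hd : lvlZ ℓ d = i) (hcd : c ≠ d) :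
    ¬ Overlap I J := by
  wlog hlt : c < d generalizing I J c d
  · rw [overlap_comm]
    exact this hJ hI hd₀ hc₀ hdJ hcI hd hc hcd.symm (lt_of_le_of_ne (not_lt.1 hlt) hcd.symm)
  intro hov
  obtain ⟨m, hcm, hmd, hm⟩ := exists_between_lvlZ_lt hc₀ hlt (hc.trans hd.symm) (hc ▸ hi)
  rcases le_or_gt m I.2 with hmI | hmI
  · have := ivLvl_le_lvlZ (ℓ := ℓ) ⟨hcI.1.trans hcm, hmI⟩
    omega
  · have hJI : J.1 < I.2 := (le_max_right _ _).trans_lt (hov.trans_le (min_le_left _ _))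
    have := ivLvl_le_lvlZ (ℓ := ℓ) ⟨hJI.trans hmI, hmd.le.trans hdJ.2⟩
    omega

lemma le_Opt {S T : Finset Iv} (hTS : T ⊆ S) (hT : NonOverlapping T) : T.card ≤ Opt S :=
  Finset.le_sup (Finset.mem_filter.2 ⟨Finset.mem_powerset.2 hTS, hT⟩)

lemma Opt_le {S : Finset Iv} {n : ℕ} (h : ∀ T ⊆ S, NonOverlapping T → T.card ≤ n) :
    Opt S ≤ n :=
  Finset.sup_le fun T hT =>
    h T (Finset.mem_powerset.1 (Finset.mem_filter.1 hT).1) (Finset.mem_filter.1 hT).2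

lemma NonOverlapping.mono_s12 {T U : Finset Iv} (hT : NonOverlapping T) (hUT : U ⊆ T) :
    NonOverlapping U :=
  fun I hI J hJ => hT I (hUT hI) J (hUT hJ)

lemma Opt_le_sum_Opt_fiberwise {ι : Type*} [DecidableEq ι] {S : Finset Iv} {s : Finset ι}
    {f : Iv → ι} (hf : ∀ I ∈ S, f I ∈ s) :
    Opt S ≤ ∑ i ∈ s, Opt (S.filter fun I => f I = i) := by
  refine Opt_le fun T hTS hT => ?_
  rw [Finset.card_eq_sum_card_fiberwise fun I hI => hf I (hTS hI)]
  exact Finset.sum_le_sum fun i _ =>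
    le_Opt (Finset.filter_subset_filter _ hTS) (hT.mono_s12 (Finset.filter_subset _ _))

lemma Opt_le_card_of_forall_exists_mem {S : Finset Iv} {C : Finset ℤ}
    (h : ∀ I ∈ S, ∃ c ∈ C, c ∈ Set.Ioc I.1 I.2) : Opt S ≤ C.card := by
  refine Opt_le fun T hTS hT => ?_
  choose! f hfC hfI using h
  refine Finset.card_le_card_of_injOn f (fun I hI => hfC I (hTS hI)) fun I hI J hJ hIJ => ?_
  by_contra hne
  exact hT I hI J hJ hne (overlap_of_mem (hfI I (hTS hI)) (hIJ ▸ hfI J (hTS hJ)))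

lemma card_le_Opt_of_separated {S : Finset Iv} {C : Finset ℤ}
    (hcov : ∀ c ∈ C, ∃ I ∈ S, c ∈ Set.Ioc I.1 I.2)
    (hsep : ∀ I ∈ S, ∀ J ∈ S, ∀ c ∈ C, ∀ d ∈ C,
      c ∈ Set.Ioc I.1 I.2 → d ∈ Set.Ioc J.1 J.2 → c ≠ d → ¬ Overlap I J) :
    C.card ≤ Opt S := by
  choose! g hgS hgc using hcov
  -- An interval through two distinct points of `C` would not even be separated from itself.
  have hinj : Set.InjOn g C := fun c hc d hd hcd => by
    by_contra hne
    refine hsep _ (hgS c hc) _ (hgS c hc) c hc d hd (hgc c hc) ?_ hne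
      (overlap_of_mem (hgc c hc) (hgc c hc))
    rw [hcd]
    exact hgc d hd
  rw [← Finset.card_image_of_injOn hinj]
  refine le_Opt (fun I hI => ?_) fun I hI J hJ hIJ => ?_
  · obtain ⟨c, hc, rfl⟩ := Finset.mem_image.1 hI
    exact hgS c hc
  · obtain ⟨c, hc, rfl⟩ := Finset.mem_image.1 hI
    obtain ⟨d, hd, rfl⟩ := Finset.mem_image.1 hJ
    exact hsep _ (hgS c hc) _ (hgS d hd) c hc d hd (hgc c hc) (hgc d hd)
      (fun h => hIJ (h ▸ rfl))

lemma ivLvl_mem_Icc {ℓ : ℕ} {I : Iv} (h : 0 ≤ I.1 ∧ I.1 < I.2 ∧ I.2 ≤ 2 ^ ℓ - 1) :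
    ivLvl ℓ I ∈ Finset.Icc 1 ℓ := by
  obtain ⟨c, hc, hcI⟩ := exists_lvlZ_eq_ivLvl (ℓ := ℓ) h.2.1
  rw [← hcI, Finset.mem_Icc]
  exact ⟨one_le_lvlZ (by linarith [hc.1]) (by linarith [hc.2]), Nat.sub_le _ _⟩

lemma Opt_filter_ivLvl_eq {ℓ i : ℕ} (hi : 1 ≤ i) {S : Finset Iv}
    (hv : ∀ I ∈ S, 0 ≤ I.1 ∧ I.1 < I.2 ∧ I.2 ≤ 2 ^ ℓ - 1) :
    Opt (S.filter fun I => ivLvl ℓ I = i) =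
      ((Finset.Ioc (0 : ℤ) (2 ^ ℓ - 1)).filter fun c =>
        lvlZ ℓ c = i ∧ ∃ I ∈ S.filter (fun I => ivLvl ℓ I = i), I.1 < c ∧ c ≤ I.2).card := by
  apply le_antisymm
  · refine Opt_le_card_of_forall_exists_mem fun I hI => ?_
    obtain ⟨hIS, hIi⟩ := Finset.mem_filter.1 hI
    obtain ⟨c, hc, hcI⟩ := exists_lvlZ_eq_ivLvl (ℓ := ℓ) (hv I hIS).2.1
    have hc₀ : c ∈ Finset.Ioc 0 (2 ^ ℓ - 1) :=
      Finset.mem_Ioc.2 ⟨(hv I hIS).1.trans_lt hc.1, hc.2.trans (hv I hIS).2.2⟩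
    exact ⟨c, Finset.mem_filter.2 ⟨hc₀, hcI.trans hIi, I, hI, hc⟩, hc⟩
  · refine card_le_Opt_of_separated (fun c hc => (Finset.mem_filter.1 hc).2.2) ?_
    intro I hI J hJ c hc d hd hcI hdJ hcd
    simp only [Finset.mem_filter, Finset.mem_Ioc] at hI hJ hc hd
    exact not_overlap_of_ivLvl_eq hi hI.2 hJ.2 hc.1.1 hd.1.1 hcI hdJ hc.2.1 hd.2.1 hcd

theorem level_decomposition_general (ℓ : ℕ) (S : Finset Iv)
    (hv : ∀ i ∈ S, 0 ≤ i.1 ∧ i.1 < i.2 ∧ i.2 ≤ 2 ^ ℓ - 1) :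
    (∀ i : ℕ, 1 ≤ i → i ≤ ℓ →
      Opt (S.filter fun iv => ivLvl ℓ iv = i) =
        ((Finset.Ioc (0 : ℤ) (2 ^ ℓ - 1)).filter fun c =>
          lvlZ ℓ c = i ∧
            ∃ iv ∈ S.filter (fun iv => ivLvl ℓ iv = i), iv.1 < c ∧ c ≤ iv.2).card) ∧
    Opt S ≤ ∑ i ∈ Finset.Icc 1 ℓ, Opt (S.filter fun iv => ivLvl ℓ iv = i) :=
  ⟨fun _ hi _ => Opt_filter_ivLvl_eq hi hv,
    Opt_le_sum_Opt_fiberwise fun I hI => ivLvl_mem_Icc (hv I hI)⟩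

/-- Level decomposition for Classify-and-Randomly-Select.
For a finite set `S` of intervals with endpoints in `{0, …, 2^ℓ − 1}` and
`S_i` the intervals of `S` of level `i`: `Opt S_i` equals the number of distinct
level-`i` integers contained in some interval of `S_i`, and
`∑_{i=1}^{ℓ} Opt S_i ≥ Opt S`. -/
theorem level_decomposition (ℓ : ℕ) (hℓ : 1 ≤ ℓ) (S : Finset Iv)
    (hv : ∀ i ∈ S, 0 ≤ i.1 ∧ i.1 < i.2 ∧ i.2 ≤ 2 ^ ℓ - 1) :
    (∀ i : ℕ, 1 ≤ i → i ≤ ℓ →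
      Opt (S.filter fun iv => ivLvl ℓ iv = i) =
        ((Finset.Ioc (0 : ℤ) (2 ^ ℓ - 1)).filter fun c =>
          lvlZ ℓ c = i ∧
            ∃ iv ∈ S.filter (fun iv => ivLvl ℓ iv = i), iv.1 < c ∧ c ≤ iv.2).card) ∧
    Opt S ≤ ∑ i ∈ Finset.Icc 1 ℓ, Opt (S.filter fun iv => ivLvl ℓ iv = i) :=
  level_decomposition_general ℓ S hv
end

section
/- Let V be a finite vertex set, let E and Ê be finite sets of edges over V, and set FP = Ê \ E and FN = E \ Ê. Let M* ⊆ Ê be any matching with |M*| = ν(Ê). Then |M* ∩ E| ≥ ν(E) − ν(FP) − ν(FN) ≥ ν(E) − 2·ν(FP ∪ FN). (This is the Trust guarantee for online matching under the edge-arrival model: Trust accepts exactly the edges of M* that arrive, so it is strictly (1 − 2γ)-competitive, where γ = ν(FP ∪ FN)/ν(E).) -/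
open scoped Classical

/-- A finite set of edges (unordered pairs of distinct vertices) is a matching if its
edges are pairwise vertex-disjoint. -/
def IsMatchingSet {V : Type*} (M : Finset (Sym2 V)) : Prop :=
  ∀ e ∈ M, ∀ f ∈ M, e ≠ f → ∀ v : V, v ∈ e → v ∉ f

/-- `nu S` is the maximum cardinality of a matching contained in the edge set `S`. -/
noncomputable def nu {V : Type*} (S : Finset (Sym2 V)) : ℕ :=
  (S.powerset.filter fun M => IsMatchingSet M).sup Finset.card

/-! Every matching splits into its part inside `S` and its part outside `S`; the latter is a
matching of `T \ S`, so `ν` is subadditive under such splittings. Applying this once to a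
maximum matching of `E` (split along `Ê`) and once to `M*` (split along `E`) gives
`ν(E) ≤ ν(Ê) + ν(FN) = |M*| + ν(FN) ≤ |M* ∩ E| + ν(FP) + ν(FN)`. -/

section

variable {V : Type*}

lemma IsMatchingSet.mono {M N : Finset (Sym2 V)} (h : N ⊆ M) (hM : IsMatchingSet M) :
    IsMatchingSet N :=
  fun e he f hf hne v hv => hM e (h he) f (h hf) hne v hv

lemma card_le_nu {M S : Finset (Sym2 V)} (hsub : M ⊆ S) (hM : IsMatchingSet M) :
    M.card ≤ nu S :=
  Finset.le_sup (Finset.mem_filter.mpr ⟨Finset.mem_powerset.mpr hsub, hM⟩)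

lemma nu_mono {S T : Finset (Sym2 V)} (h : S ⊆ T) : nu S ≤ nu T :=
  Finset.sup_le fun M hM => by
    rw [Finset.mem_filter, Finset.mem_powerset] at hM
    exact card_le_nu (hM.1.trans h) hM.2

lemma exists_isMatchingSet_card_eq_nu (S : Finset (Sym2 V)) :
    ∃ M ⊆ S, IsMatchingSet M ∧ M.card = nu S := by
  have hempty : ∅ ∈ S.powerset.filter fun M => IsMatchingSet M :=
    Finset.mem_filter.mpr ⟨Finset.empty_mem_powerset S, fun e he => by simp at he⟩
  obtain ⟨M, hM, hcard⟩ := Finset.exists_mem_eq_sup _ ⟨∅, hempty⟩ Finset.card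
  rw [Finset.mem_filter, Finset.mem_powerset] at hM
  exact ⟨M, hM.1, hM.2, hcard.symm⟩

lemma IsMatchingSet.card_le_card_inter_add_nu_sdiff [DecidableEq V] {M S T : Finset (Sym2 V)}
    (hM : IsMatchingSet M) (hMT : M ⊆ T) : M.card ≤ (M ∩ S).card + nu (T \ S) := by
  rw [← Finset.card_inter_add_card_sdiff M S]
  exact Nat.add_le_add_left (card_le_nu (Finset.sdiff_subset_sdiff hMT le_rfl)
    (hM.mono Finset.sdiff_subset)) _

lemma nu_le_nu_add_nu_sdiff [DecidableEq V] (S T : Finset (Sym2 V)) :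
    nu S ≤ nu T + nu (S \ T) := by
  obtain ⟨M, hMS, hM, hcard⟩ := exists_isMatchingSet_card_eq_nu S
  have hMT : (M ∩ T).card ≤ nu T :=
    card_le_nu Finset.inter_subset_right (hM.mono Finset.inter_subset_left)
  have := hM.card_le_card_inter_add_nu_sdiff (S := T) hMS
  omega

end

theorem trust_matching_competitive_general
    {V : Type*} [DecidableEq V]
    (E Ehat : Finset (Sym2 V))
    (Mstar : Finset (Sym2 V)) (hsub : Mstar ⊆ Ehat)
    (hmatch : IsMatchingSet Mstar) (hopt : Mstar.card = nu Ehat) :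
    (nu E : ℤ) - nu (Ehat \ E) - nu (E \ Ehat) ≤ ((Mstar ∩ E).card : ℤ) ∧
    (nu E : ℤ) - 2 * nu ((Ehat \ E) ∪ (E \ Ehat)) ≤
      (nu E : ℤ) - nu (Ehat \ E) - nu (E \ Ehat) := by
  have hnuE := nu_le_nu_add_nu_sdiff E Ehat
  have hMstar := hmatch.card_le_card_inter_add_nu_sdiff (S := E) hsub
  have hFP : nu (Ehat \ E) ≤ nu ((Ehat \ E) ∪ (E \ Ehat)) := nu_mono Finset.subset_union_left
  have hFN : nu (E \ Ehat) ≤ nu ((Ehat \ E) ∪ (E \ Ehat)) := nu_mono Finset.subset_union_right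
  omega

/-- Trust guarantee for online matching under edge arrival.
Let `V` be a finite vertex set, `E` and `Ehat` finite sets of edges, `FP = Ehat \ E`,
`FN = E \ Ehat`, and let `Mstar ⊆ Ehat` be a matching with `|Mstar| = ν(Ehat)`. Then
`|Mstar ∩ E| ≥ ν(E) − ν(FP) − ν(FN) ≥ ν(E) − 2·ν(FP ∪ FN)`. -/
theorem trust_matching_competitive
    {V : Type*} [Fintype V] [DecidableEq V]
    (E Ehat : Finset (Sym2 V))
    (hE : ∀ e ∈ E, ¬ e.IsDiag) (hEhat : ∀ e ∈ Ehat, ¬ e.IsDiag)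
    (Mstar : Finset (Sym2 V)) (hsub : Mstar ⊆ Ehat)
    (hmatch : IsMatchingSet Mstar) (hopt : Mstar.card = nu Ehat) :
    (nu E : ℤ) - nu (Ehat \ E) - nu (E \ Ehat) ≤ ((Mstar ∩ E).card : ℤ) ∧
    (nu E : ℤ) - 2 * nu ((Ehat \ E) ∪ (E \ Ehat)) ≤
      (nu E : ℤ) - nu (Ehat \ E) - nu (E \ Ehat) :=
  trust_matching_competitive_general E Ehat Mstar hsub hmatch hopt
end

section
/- Let G be a finite simple graph and L(G) its line graph. Let S and Ŝ be finite sets of vertices of L(G), and let Ŝ* ⊆ Ŝ be any independent set of L(G) with |Ŝ*| = α(Ŝ). Then |Ŝ* ∩ S| ≥ α(S) − α(S \ Ŝ) − α(Ŝ \ S) ≥ α(S) − 2·α((S \ Ŝ) ∪ (Ŝ \ S)). (This is the Trust guarantee for the online independent set problem on line graphs under the vertex-arrival model: Trust accepts exactly the vertices of Ŝ* that arrive, so it is strictly (1 − 2γ)-competitive, where γ = α((S \ Ŝ) ∪ (Ŝ \ S))/α(S).) -/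
/-!
Let `I` be a maximum independent subset of `S`. Its part inside `Ŝ` is an independent subset
of `Ŝ`, so it is no larger than `Ŝ*`; its part outside `Ŝ` is an independent subset of `S \ Ŝ`.
Splitting `Ŝ*` along `S` in the same way bounds `|Ŝ*|` by `|Ŝ* ∩ S| + α(Ŝ \ S)`, which gives
the first inequality. The second is monotonicity of `α`.
-/

open scoped Classical

/-- A finite set `T` of vertices of a graph `H` is an independent set if no two of
its elements are adjacent in `H`. -/
def IsIndepSetIn {W : Type*} (H : SimpleGraph W) (T : Finset W) : Prop :=
  ∀ a ∈ T, ∀ b ∈ T, ¬ H.Adj a b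

/-- `alphaIn H T` is the maximum cardinality of a subset of `T` that is an
independent set in `H`. -/
noncomputable def alphaIn {W : Type*} (H : SimpleGraph W) (T : Finset W) : ℕ :=
  (T.powerset.filter fun U => IsIndepSetIn H U).sup Finset.card

section

variable {W : Type*} (H : SimpleGraph W)

theorem IsIndepSetIn.mono {H : SimpleGraph W} {T U : Finset W} (hT : IsIndepSetIn H T)
    (hUT : U ⊆ T) : IsIndepSetIn H U :=
  fun a ha b hb => hT a (hUT ha) b (hUT hb)

theorem card_le_alphaIn {T U : Finset W} (hUT : U ⊆ T) (hU : IsIndepSetIn H U) :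
    U.card ≤ alphaIn H T :=
  Finset.le_sup (Finset.mem_filter.mpr ⟨Finset.mem_powerset.mpr hUT, hU⟩)

theorem exists_isIndepSetIn_card_eq_alphaIn (T : Finset W) :
    ∃ U ⊆ T, IsIndepSetIn H U ∧ U.card = alphaIn H T := by
  have hne : (T.powerset.filter fun U => IsIndepSetIn H U).Nonempty :=
    ⟨∅, Finset.mem_filter.mpr ⟨Finset.empty_mem_powerset T, by simp [IsIndepSetIn]⟩⟩
  obtain ⟨U, hU, hcard⟩ := Finset.exists_mem_eq_sup _ hne Finset.card
  rw [Finset.mem_filter, Finset.mem_powerset] at hU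
  exact ⟨U, hU.1, hU.2, hcard.symm⟩

theorem alphaIn_mono {T T' : Finset W} (h : T ⊆ T') : alphaIn H T ≤ alphaIn H T' := by
  obtain ⟨U, hUT, hU, hcard⟩ := exists_isIndepSetIn_card_eq_alphaIn H T
  exact hcard ▸ card_le_alphaIn H (hUT.trans h) hU

theorem alphaIn_le_card_inter_add_alphaIn_sdiff [DecidableEq W] {S T Tstar : Finset W}
    (hsub : Tstar ⊆ T) (hindep : IsIndepSetIn H Tstar) (hopt : Tstar.card = alphaIn H T) :
    alphaIn H S ≤ (Tstar ∩ S).card + alphaIn H (S \ T) + alphaIn H (T \ S) := by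
  obtain ⟨I, hIS, hI, hIcard⟩ := exists_isIndepSetIn_card_eq_alphaIn H S
  have hin : (I ∩ T).card ≤ Tstar.card :=
    hopt ▸ card_le_alphaIn H Finset.inter_subset_right (hI.mono Finset.inter_subset_left)
  have hout : (I \ T).card ≤ alphaIn H (S \ T) :=
    card_le_alphaIn H (Finset.sdiff_subset_sdiff hIS le_rfl) (hI.mono Finset.sdiff_subset)
  have hstar_out : (Tstar \ S).card ≤ alphaIn H (T \ S) :=
    card_le_alphaIn H (Finset.sdiff_subset_sdiff hsub le_rfl) (hindep.mono Finset.sdiff_subset)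
  have hIsplit := Finset.card_inter_add_card_sdiff I T
  have hstar_split := Finset.card_inter_add_card_sdiff Tstar S
  omega

theorem alphaIn_add_alphaIn_le_two_mul_alphaIn_union [DecidableEq W] (A B : Finset W) :
    alphaIn H A + alphaIn H B ≤ 2 * alphaIn H (A ∪ B) := by
  have hA := alphaIn_mono H (Finset.subset_union_left : A ⊆ A ∪ B)
  have hB := alphaIn_mono H (Finset.subset_union_right : B ⊆ A ∪ B)
  omega

end

theorem trust_independent_set_line_graph_competitive_general
    {V : Type*} [DecidableEq V] (G : SimpleGraph V)
    (S Shat : Finset G.edgeSet)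
    (Sstar : Finset G.edgeSet) (hsub : Sstar ⊆ Shat)
    (hindep : IsIndepSetIn G.lineGraph Sstar)
    (hopt : Sstar.card = alphaIn G.lineGraph Shat) :
    (alphaIn G.lineGraph S : ℤ) - alphaIn G.lineGraph (S \ Shat) -
        alphaIn G.lineGraph (Shat \ S) ≤ ((Sstar ∩ S).card : ℤ) ∧
    (alphaIn G.lineGraph S : ℤ) - 2 * alphaIn G.lineGraph ((S \ Shat) ∪ (Shat \ S)) ≤
      (alphaIn G.lineGraph S : ℤ) - alphaIn G.lineGraph (S \ Shat) -
        alphaIn G.lineGraph (Shat \ S) := by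
  have htrust := alphaIn_le_card_inter_add_alphaIn_sdiff G.lineGraph (S := S) hsub hindep hopt
  have hsymm := alphaIn_add_alphaIn_le_two_mul_alphaIn_union G.lineGraph (S \ Shat) (Shat \ S)
  omega

/-- Trust guarantee for online independent set on line graphs under
vertex arrival. Let `G` be a finite simple graph and `L(G)` its line graph. For
finite sets `S`, `Shat` of vertices of `L(G)` and any independent set
`Sstar ⊆ Shat` of `L(G)` with `|Sstar| = α(Shat)`,
`|Sstar ∩ S| ≥ α(S) − α(S \ Shat) − α(Shat \ S) ≥ α(S) − 2·α((S \ Shat) ∪ (Shat \ S))`. -/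
theorem trust_independent_set_line_graph_competitive
    {V : Type*} [Fintype V] [DecidableEq V] (G : SimpleGraph V)
    (S Shat : Finset G.edgeSet)
    (Sstar : Finset G.edgeSet) (hsub : Sstar ⊆ Shat)
    (hindep : IsIndepSetIn G.lineGraph Sstar)
    (hopt : Sstar.card = alphaIn G.lineGraph Shat) :
    (alphaIn G.lineGraph S : ℤ) - alphaIn G.lineGraph (S \ Shat) -
        alphaIn G.lineGraph (Shat \ S) ≤ ((Sstar ∩ S).card : ℤ) ∧
    (alphaIn G.lineGraph S : ℤ) - 2 * alphaIn G.lineGraph ((S \ Shat) ∪ (Shat \ S)) ≤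
      (alphaIn G.lineGraph S : ℤ) - alphaIn G.lineGraph (S \ Shat) -
        alphaIn G.lineGraph (Shat \ S) :=
  trust_independent_set_line_graph_competitive_general G S Shat Sstar hsub hindep hopt
end
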